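/- Let D_n be the Dyck language over n parenthesis pairs p₁,…,p_n with closings p̄₁,…,p̄_n, and let m = ⌈log₂ n⌉. Define Γ mapping each opening parenthesis p_i to the m-symbol string encoding the m-digit binary representation of i−1 using ( for 0 and [ for 1, and each closing p̄_i to the m-symbol string encoding the reverse of the m-digit binary representation of i−1 using ) for 0 and ] for 1. Extend Γ to strings by concatenation. Then s ∈ D_n if and only if Γ(s) ∈ D₂. -/
import Mathlib


/-- The four-symbol alphabet `{(, ), [, ]}` of Dyck-2. -/
inductive Par : Type
  | lp  -- (
  | rp  -- )
  | lb  -- [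
  | rb  -- ]
deriving DecidableEq

/-- The Dyck-2 language over the pairs `{(, )}` and `{[, ]}`. -/
inductive Dyck2 : List Par → Prop
  | nil : Dyck2 []
  | wrapParen {u : List Par} : Dyck2 u → Dyck2 (Par.lp :: u ++ [Par.rp])
  | wrapBrack {u : List Par} : Dyck2 u → Dyck2 (Par.lb :: u ++ [Par.rb])
  | append {u v : List Par} : Dyck2 u → Dyck2 v → Dyck2 (u ++ v)

/-- The Dyck language `Dₙ` over `n` parenthesis pairs; a symbol `(i, true)` is the
opening parenthesis `pᵢ` and `(i, false)` its closing `p̄ᵢ`. -/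
inductive DyckN (n : ℕ) : List (Fin n × Bool) → Prop
  | nil : DyckN n []
  | wrap {u : List (Fin n × Bool)} (i : Fin n) :
      DyckN n u → DyckN n ((i, true) :: u ++ [(i, false)])
  | append {u v : List (Fin n × Bool)} : DyckN n u → DyckN n v → DyckN n (u ++ v)

/-- The `m`-digit binary representation of `i` (most significant bit first). -/
def binDigits (m i : ℕ) : List Bool := (List.range m).map fun j => i.testBit (m - 1 - j)

/-- `Γ(pᵢ)`: the `m`-digit binary representation of `i`, with `(` for 0 and `[` for 1. -/
def encOpen (m i : ℕ) : List Par := (binDigits m i).map fun b => if b then Par.lb else Par.lp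

/-- `Γ(p̄ᵢ)`: the reverse of the `m`-digit binary representation of `i`, with `)` for 0
and `]` for 1. -/
def encClose (m i : ℕ) : List Par :=
  ((binDigits m i).reverse).map fun b => if b then Par.rb else Par.rp

/-- `Γ` extended to strings by concatenation (opening `pᵢ` and closing `p̄ᵢ` are encoded
from `i - 1`, i.e. from the 0-based index). -/
def Γ (n m : ℕ) (s : List (Fin n × Bool)) : List Par :=
  (s.map fun a => if a.2 then encOpen m a.1.val else encClose m a.1.val).flatten

/-! ### Auxiliary machinery -/

def opn (b : Bool) : Par := if b then Par.lb else Par.lp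
def cls (b : Bool) : Par := if b then Par.rb else Par.rp

lemma encOpen_eq (m i : ℕ) : encOpen m i = (binDigits m i).map opn := rfl
lemma encClose_eq (m i : ℕ) : encClose m i = ((binDigits m i).reverse).map cls := rfl

@[simp] lemma binDigits_length (m i : ℕ) : (binDigits m i).length = m := by
  simp [binDigits]

/-- Stack machine for `Dyck2`. -/
def run2 : List Bool → List Par → Option (List Bool)
  | st, [] => some st
  | st, Par.lp :: t => run2 (false :: st) t
  | st, Par.lb :: t => run2 (true :: st) t
  | st, Par.rp :: t =>
      match st with
      | false :: st' => run2 st' t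
      | _ => none
  | st, Par.rb :: t =>
      match st with
      | true :: st' => run2 st' t
      | _ => none

lemma run2_append (u : List Par) : ∀ (v : List Par) (st : List Bool),
    run2 st (u ++ v) = (run2 st u).bind fun st' => run2 st' v := by
  induction u with
  | nil => intro v st; simp [run2]
  | cons c u ih =>
    intro v st
    cases c with
    | lp => simpa [run2] using ih v (false :: st)
    | lb => simpa [run2] using ih v (true :: st)
    | rp =>
      match st with
      | [] => simp [run2]
      | false :: st' => simpa [run2] using ih v st'
      | true :: st' => simp [run2]
    | rb =>
      match st with
      | [] => simp [run2]
      | false :: st' => simp [run2]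
      | true :: st' => simpa [run2] using ih v st'

lemma run2_sound {w : List Par} (h : Dyck2 w) : ∀ st, run2 st w = some st := by
  induction h with
  | nil => intro st; rfl
  | wrapParen _ ih =>
    intro st
    show run2 st (Par.lp :: (_ ++ [Par.rp])) = some st
    rw [run2, run2_append, ih (false :: st)]
    rfl
  | wrapBrack _ ih =>
    intro st
    show run2 st (Par.lb :: (_ ++ [Par.rb])) = some st
    rw [run2, run2_append, ih (true :: st)]
    rfl
  | append _ _ ih1 ih2 =>
    intro st
    rw [run2_append, ih1 st]
    exact ih2 st

/-- Closing a stack: `Closes st t` iff `t = u₀ ++ cls b₁ ++ u₁ ++ ⋯ ++ cls b_k ++ u_k`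
with each `uᵢ ∈ Dyck2` and `st = [b₁, …, b_k]`. -/
inductive Closes : List Bool → List Par → Prop
  | nil {u} : Dyck2 u → Closes [] u
  | cons {u v st b} : Dyck2 u → Closes st v → Closes (b :: st) (u ++ cls b :: v)

lemma Closes.prepend {w t : List Par} {st : List Bool} (hw : Dyck2 w) (h : Closes st t) :
    Closes st (w ++ t) := by
  induction h with
  | nil hu => exact Closes.nil (Dyck2.append hw hu)
  | @cons u v st b hu hv _ =>
    rw [← List.append_assoc]
    exact Closes.cons (Dyck2.append hw hu) hv

lemma run2_closes : ∀ (t : List Par) (st : List Bool), run2 st t = some [] → Closes st t := by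
  intro t
  induction t with
  | nil =>
    intro st h
    simp [run2] at h
    subst h
    exact Closes.nil Dyck2.nil
  | cons c t ih =>
    intro st h
    cases c with
    | lp =>
      have hcl := ih (false :: st) h
      cases hcl with
      | cons hu hv =>
        rename_i u v
        have hw : Dyck2 (Par.lp :: u ++ [Par.rp]) := Dyck2.wrapParen hu
        have h2 : Par.lp :: (u ++ cls false :: v) = (Par.lp :: u ++ [Par.rp]) ++ v := by
          simp [cls]
        rw [h2]
        exact Closes.prepend hw hv
    | lb =>
      have hcl := ih (true :: st) h
      cases hcl with
      | cons hu hv =>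
        rename_i u v
        have hw : Dyck2 (Par.lb :: u ++ [Par.rb]) := Dyck2.wrapBrack hu
        have h2 : Par.lb :: (u ++ cls true :: v) = (Par.lb :: u ++ [Par.rb]) ++ v := by
          simp [cls]
        rw [h2]
        exact Closes.prepend hw hv
    | rp =>
      match st with
      | [] => simp [run2] at h
      | true :: st' => simp [run2] at h
      | false :: st' =>
        have := ih st' h
        have : Closes (false :: st') ([] ++ cls false :: t) := Closes.cons Dyck2.nil this
        simpa [cls] using this
    | rb =>
      match st with
      | [] => simp [run2] at h
      | false :: st' => simp [run2] at h
      | true :: st' =>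
        have := ih st' h
        have : Closes (true :: st') ([] ++ cls true :: t) := Closes.cons Dyck2.nil this
        simpa [cls] using this

lemma run2_complete {t : List Par} (h : run2 [] t = some []) : Dyck2 t := by
  have := run2_closes t [] h
  cases this with
  | nil hu => exact hu

/-! ### Stack machine for `DyckN` -/

def runN (n : ℕ) : List (Fin n) → List (Fin n × Bool) → Option (List (Fin n))
  | st, [] => some st
  | st, (i, true) :: t => runN n (i :: st) t
  | st, (i, false) :: t =>
      match st with
      | j :: st' => if i = j then runN n st' t else none
      | [] => none

inductive ClosesN (n : ℕ) : List (Fin n) → List (Fin n × Bool) → Prop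
  | nil {u} : DyckN n u → ClosesN n [] u
  | cons {u v st} (i : Fin n) : DyckN n u → ClosesN n st v →
      ClosesN n (i :: st) (u ++ (i, false) :: v)

lemma ClosesN.prepend {n : ℕ} {w t : List (Fin n × Bool)} {st : List (Fin n)}
    (hw : DyckN n w) (h : ClosesN n st t) : ClosesN n st (w ++ t) := by
  induction h with
  | nil hu => exact ClosesN.nil (DyckN.append hw hu)
  | cons i hu hv _ =>
    rw [← List.append_assoc]
    exact ClosesN.cons i (DyckN.append hw hu) hv

lemma runN_closes {n : ℕ} : ∀ (t : List (Fin n × Bool)) (st : List (Fin n)),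
    runN n st t = some [] → ClosesN n st t := by
  intro t
  induction t with
  | nil =>
    intro st h
    simp [runN] at h
    subst h
    exact ClosesN.nil DyckN.nil
  | cons c t ih =>
    intro st h
    obtain ⟨i, b⟩ := c
    cases b with
    | true =>
      have hcl := ih (i :: st) h
      cases hcl with
      | cons _ hu hv =>
        rename_i u v
        have hw : DyckN n ((i, true) :: u ++ [(i, false)]) := DyckN.wrap i hu
        have h2 : ((i, true) :: (u ++ (i, false) :: v) : List (Fin n × Bool))
            = ((i, true) :: u ++ [(i, false)]) ++ v := by simp
        rw [h2]
        exact ClosesN.prepend hw hv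
    | false =>
      match st with
      | [] => simp [runN] at h
      | j :: st' =>
        by_cases hij : i = j
        · subst hij
          simp only [runN, if_pos rfl] at h
          have := ih st' h
          have : ClosesN n (i :: st') ([] ++ (i, false) :: t) := ClosesN.cons i DyckN.nil this
          simpa using this
        · simp [runN, hij] at h

lemma runN_complete {n : ℕ} {t : List (Fin n × Bool)} (h : runN n [] t = some []) :
    DyckN n t := by
  have := runN_closes t [] h
  cases this with
  | nil hu => exact hu

/-! ### Relating the two machines via the encoding -/

lemma run2_opens : ∀ (bs : List Bool) (st : List Bool) (t : List Par),
    run2 st (bs.map opn ++ t) = run2 (bs.reverse ++ st) t := by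
  intro bs
  induction bs with
  | nil => intro st t; simp
  | cons b bs ih =>
    intro st t
    cases b <;> simpa [run2, opn] using ih (_ :: st) t

lemma run2_closes_prefix : ∀ (bs : List Bool) (st : List Bool) (t : List Par) (r : List Bool),
    run2 st (bs.map cls ++ t) = some r → ∃ st', st = bs ++ st' ∧ run2 st' t = some r := by
  intro bs
  induction bs with
  | nil => intro st t r h; exact ⟨st, by simp, by simpa using h⟩
  | cons b bs ih =>
    intro st t r h
    cases b with
    | false =>
      match st with
      | [] => simp [cls, run2] at h
      | true :: st1 => simp [cls, run2] at h
      | false :: st1 =>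
        simp only [cls, List.map_cons, List.cons_append, run2] at h
        obtain ⟨st', h1, h2⟩ := ih st1 t r h
        exact ⟨st', by simp [h1], h2⟩
    | true =>
      match st with
      | [] => simp [cls, run2] at h
      | false :: st1 => simp [cls, run2] at h
      | true :: st1 =>
        simp only [cls, List.map_cons, List.cons_append, run2] at h
        obtain ⟨st', h1, h2⟩ := ih st1 t r h
        exact ⟨st', by simp [h1], h2⟩

lemma binDigits_injOn {m i j : ℕ} (hi : i < 2 ^ m) (hj : j < 2 ^ m)
    (h : binDigits m i = binDigits m j) : i = j := by
  apply Nat.eq_of_testBit_eq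
  intro k
  by_cases hk : k < m
  · have hmem : m - 1 - k < m := by omega
    have h3 := congrArg (fun l => l[m - 1 - k]?) h
    simp only [binDigits, List.getElem?_map, List.getElem?_range hmem,
      Option.map_some] at h3
    have hkk : m - 1 - (m - 1 - k) = k := by omega
    rw [hkk] at h3
    exact Option.some.inj h3
  · have h2 : 2 ^ m ≤ 2 ^ k := Nat.pow_le_pow_right (by norm_num) (by omega)
    rw [Nat.testBit_eq_false_of_lt (lt_of_lt_of_le hi h2),
        Nat.testBit_eq_false_of_lt (lt_of_lt_of_le hj h2)]

/-- Encoding of an `n`-ary stack as a binary stack. -/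
def stEnc (n m : ℕ) (st : List (Fin n)) : List Bool :=
  (st.map fun i => (binDigits m i.val).reverse).flatten

@[simp] lemma stEnc_nil (n m : ℕ) : stEnc n m [] = [] := rfl

@[simp] lemma stEnc_cons (n m : ℕ) (i : Fin n) (st : List (Fin n)) :
    stEnc n m (i :: st) = (binDigits m i.val).reverse ++ stEnc n m st := rfl

lemma stEnc_eq_nil {n m : ℕ} (hm : 1 ≤ m) {st : List (Fin n)}
    (h : stEnc n m st = []) : st = [] := by
  cases st with
  | nil => rfl
  | cons i st =>
    exfalso
    have : ((binDigits m i.val).reverse ++ stEnc n m st).length = 0 := by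
      rw [← stEnc_cons, h]; rfl
    simp at this
    omega

lemma Γ_cons (n m : ℕ) (a : Fin n × Bool) (s : List (Fin n × Bool)) :
    Γ n m (a :: s) = (if a.2 then encOpen m a.1.val else encClose m a.1.val) ++ Γ n m s := by
  simp [Γ]

lemma Γ_append (n m : ℕ) (u v : List (Fin n × Bool)) :
    Γ n m (u ++ v) = Γ n m u ++ Γ n m v := by
  simp [Γ]

/-- The key simulation lemma for the reverse direction. -/
lemma key {n m : ℕ} (hm : 1 ≤ m) (hpow : n ≤ 2 ^ m) :
    ∀ (s : List (Fin n × Bool)) (st : List (Fin n)),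
      run2 (stEnc n m st) (Γ n m s) = some [] → runN n st s = some [] := by
  intro s
  induction s with
  | nil =>
    intro st h
    simp only [Γ, List.map_nil, List.flatten_nil, run2] at h
    have := stEnc_eq_nil hm (Option.some.inj h)
    subst this
    rfl
  | cons a s ih =>
    intro st h
    obtain ⟨i, b⟩ := a
    cases b with
    | true =>
      have hΓ : Γ n m ((i, true) :: s) = (binDigits m i.val).map opn ++ Γ n m s := by
        simp [Γ, encOpen_eq]
      rw [hΓ, run2_opens, ← stEnc_cons] at h
      exact ih (i :: st) h
    | false =>
      have hΓ : Γ n m ((i, false) :: s)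
          = ((binDigits m i.val).reverse).map cls ++ Γ n m s := by
        simp [Γ, encClose_eq]
      rw [hΓ] at h
      obtain ⟨st2, h1, h2⟩ := run2_closes_prefix _ _ _ _ h
      match st with
      | [] =>
        exfalso
        have : (stEnc n m ([] : List (Fin n))).length
            = ((binDigits m i.val).reverse ++ st2).length := by rw [h1]
        simp at this
        omega
      | j :: st' =>
        rw [stEnc_cons] at h1
        have hlen : ((binDigits m j.val).reverse).length = ((binDigits m i.val).reverse).length := by
          simp
        obtain ⟨heq, hst⟩ := List.append_inj h1.symm (by simpa using hlen.symm)
        have hij : i = j := by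
          have : binDigits m i.val = binDigits m j.val := by
            have h4 := congrArg List.reverse heq
            simp only [List.reverse_reverse] at h4
            exact h4
          exact Fin.ext (binDigits_injOn (lt_of_lt_of_le i.isLt hpow)
            (lt_of_lt_of_le j.isLt hpow) this)
        subst hij
        show runN n (i :: st') ((i, false) :: s) = some []
        simp only [runN, if_pos rfl]
        exact ih st' (by rw [hst] at h2; exact h2)

/-- Forward direction helper: wrapping by an encoded pair preserves `Dyck2`. -/
lemma dyck2_wrap_bits : ∀ (bs : List Bool) {u : List Par}, Dyck2 u →
    Dyck2 (bs.map opn ++ u ++ (bs.reverse).map cls) := by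
  intro bs
  induction bs with
  | nil => intro u hu; simpa using hu
  | cons b bs ih =>
    intro u hu
    have := ih hu
    have h2 : (b :: bs).map opn ++ u ++ ((b :: bs).reverse).map cls
        = opn b :: (bs.map opn ++ u ++ (bs.reverse).map cls) ++ [cls b] := by
      simp
    rw [h2]
    cases b with
    | false => exact Dyck2.wrapParen this
    | true => exact Dyck2.wrapBrack this

lemma dyck2_enc_wrap {m i : ℕ} {u : List Par} (hu : Dyck2 u) :
    Dyck2 (encOpen m i ++ u ++ encClose m i) := by
  rw [encOpen_eq, encClose_eq]
  exact dyck2_wrap_bits (binDigits m i) hu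

/-- The `Dₙ`-to-`D₂` reduction: with `m = ⌈log₂ n⌉ ≥ 1`, we have `s ∈ Dₙ ↔ Γ(s) ∈ D₂`. -/
theorem dyckN_iff_encode_dyck2 (n : ℕ) (hn : 1 ≤ n) (hm : 1 ≤ Nat.clog 2 n)
    (s : List (Fin n × Bool)) :
    DyckN n s ↔ Dyck2 (Γ n (Nat.clog 2 n) s) := by
  set m := Nat.clog 2 n with hmdef
  constructor
  · intro h
    induction h with
    | nil => exact Dyck2.nil
    | wrap i _ ih =>
      rename_i u _
      have h2 : Γ n m ((i, true) :: u ++ [(i, false)])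
          = encOpen m i.val ++ Γ n m u ++ encClose m i.val := by
        rw [show ((i, true) :: u ++ [(i, false)] : List (Fin n × Bool))
          = [(i, true)] ++ u ++ [(i, false)] from by simp]
        rw [Γ_append, Γ_append]
        simp [Γ]
      rw [h2]
      exact dyck2_enc_wrap ih
    | append _ _ ih1 ih2 =>
      rw [Γ_append]
      exact Dyck2.append ih1 ih2
  · intro h
    have hpow : n ≤ 2 ^ m := Nat.le_pow_clog (by norm_num) n
    have hrun := run2_sound h []
    exact runN_complete (key hm hpow s [] (by simpa using hrun))
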